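/- For every s, t > 0 and u, v ∈ [0,1], the map (u,v) ↦ ψ(s,t;u,v) satisfies the copula boundary conditions: ψ(s,t;0,v) = 0, ψ(s,t;u,0) = 0, ψ(s,t;u,1) = u, and ψ(s,t;1,v) = v. -/

import Mathlib

open MeasureTheory Set Filter

/-- Density of the standard normal distribution (φ). -/
noncomputable def stdNormalPDF (x : ℝ) : ℝ := (Real.sqrt (2 * Real.pi))⁻¹ * Real.exp (-x ^ 2 / 2)

/-- Cumulative distribution function of the standard normal distribution (Φ). -/
noncomputable def stdNormalCDF (x : ℝ) : ℝ := ∫ t in Set.Iic x, stdNormalPDF t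

/-- The standard normal quantile function (Φ⁻¹), the inverse of Φ on (0,1). -/
noncomputable def stdNormalCDFInv : ℝ → ℝ := Function.invFun stdNormalCDF

/-- The integrand of the Brownian-copula kernel; the `if` branches encode the
conventions Φ⁻¹(0) = -∞ (so Φ(·) = 0) and Φ⁻¹(1) = +∞ (so Φ(·) = 1). -/
noncomputable def psiIntegrand (s t v w : ℝ) : ℝ :=
  if v ≤ 0 then 0
  else if 1 ≤ v then 1
  else stdNormalCDF ((Real.sqrt (max s t) * stdNormalCDFInv v -
      Real.sqrt (min s t) * stdNormalCDFInv w) / Real.sqrt |t - s|)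

/-- The Brownian-copula kernel ψ(s,t;u,v). -/
noncomputable def psi (s t u v : ℝ) : ℝ :=
  if 0 < |t - s| then ∫ w in (0:ℝ)..u, psiIntegrand s t v w
  else if 0 < t then min u v
  else u * v

lemma continuous_stdNormalPDF : Continuous stdNormalPDF := by
  unfold stdNormalPDF; fun_prop

lemma stdNormalPDF_pos (x : ℝ) : 0 < stdNormalPDF x := by
  unfold stdNormalPDF
  have := Real.pi_pos
  positivity

lemma stdNormalPDF_eq : stdNormalPDF = fun x => (Real.sqrt (2 * Real.pi))⁻¹ * Real.exp (-(2⁻¹:ℝ) * x ^ 2) := by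
  funext x; unfold stdNormalPDF; ring_nf

lemma integrable_stdNormalPDF : Integrable stdNormalPDF := by
  rw [stdNormalPDF_eq]
  exact (integrable_exp_neg_mul_sq (by norm_num)).const_mul _

lemma sqrt_two_pi_pos : 0 < Real.sqrt (2 * Real.pi) :=
  Real.sqrt_pos.mpr (by positivity)

lemma integral_stdNormalPDF : ∫ x, stdNormalPDF x = 1 := by
  rw [stdNormalPDF_eq]
  rw [MeasureTheory.integral_const_mul, integral_gaussian]
  have : Real.pi / 2⁻¹ = 2 * Real.pi := by ring
  rw [this]
  exact inv_mul_cancel₀ (ne_of_gt sqrt_two_pi_pos)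

lemma integral_Iic_comp_affine (f : ℝ → ℝ) {c : ℝ} (hc : 0 < c) (d a : ℝ) :
    ∫ z in Iic a, f ((z - d) / c) = c * ∫ y in Iic ((a - d) / c), f y := by
  have h1 : ∀ z : ℝ, (Iic a).indicator (fun z => f ((z - d) / c)) z
      = (Iic ((a - d) / c)).indicator f ((z - d) / c) := by
    intro z
    have hiff : (z - d) / c ≤ (a - d) / c ↔ z ≤ a := by
      rw [div_le_div_iff_of_pos_right hc]
      constructor <;> intro h <;> linarith
    simp only [Set.indicator_apply, mem_Iic, hiff]
  calc ∫ z in Iic a, f ((z - d) / c)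
      = ∫ z, (Iic a).indicator (fun z => f ((z - d) / c)) z := (integral_indicator measurableSet_Iic).symm
    _ = ∫ z, (Iic ((a - d) / c)).indicator f ((z - d) / c) := by simp_rw [h1]
    _ = ∫ y, (Iic ((a - d) / c)).indicator f (y / c) := by
        simpa using
          integral_sub_right_eq_self (μ := volume) (fun y => (Iic ((a - d) / c)).indicator f (y / c)) d
    _ = |c| • ∫ y, (Iic ((a - d) / c)).indicator f y := Measure.integral_comp_div _ c
    _ = c * ∫ y in Iic ((a - d) / c), f y := by
        rw [integral_indicator measurableSet_Iic, abs_of_pos hc, smul_eq_mul]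

lemma integrableOn_stdNormalPDF (s : Set ℝ) : IntegrableOn stdNormalPDF s :=
  integrable_stdNormalPDF.integrableOn

lemma stdNormalCDF_sub_eq (x y : ℝ) :
    stdNormalCDF y - stdNormalCDF x = ∫ t in x..y, stdNormalPDF t :=
  intervalIntegral.integral_Iic_sub_Iic (integrableOn_stdNormalPDF _) (integrableOn_stdNormalPDF _)

lemma continuous_stdNormalCDF : Continuous stdNormalCDF := by
  have h : stdNormalCDF = fun y => (∫ t in (0:ℝ)..y, stdNormalPDF t) + stdNormalCDF 0 := by
    funext y
    have := stdNormalCDF_sub_eq 0 y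
    linarith
  rw [h]
  exact (intervalIntegral.continuous_primitive
    (fun a b => integrable_stdNormalPDF.intervalIntegrable) 0).add continuous_const

lemma strictMono_stdNormalCDF : StrictMono stdNormalCDF := by
  intro x y hxy
  have h : 0 < ∫ t in x..y, stdNormalPDF t :=
    intervalIntegral.intervalIntegral_pos_of_pos
      integrable_stdNormalPDF.intervalIntegrable stdNormalPDF_pos hxy
  have := stdNormalCDF_sub_eq x y
  linarith

lemma stdNormalCDF_nonneg (x : ℝ) : 0 ≤ stdNormalCDF x :=
  setIntegral_nonneg measurableSet_Iic (fun t _ => (stdNormalPDF_pos t).le)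

lemma stdNormalCDF_pos (x : ℝ) : 0 < stdNormalCDF x := by
  have h := stdNormalCDF_sub_eq (x - 1) x
  have h2 : 0 < ∫ t in (x-1)..x, stdNormalPDF t :=
    intervalIntegral.intervalIntegral_pos_of_pos
      integrable_stdNormalPDF.intervalIntegrable stdNormalPDF_pos (by linarith)
  have := stdNormalCDF_nonneg (x - 1)
  linarith

lemma tendsto_stdNormalCDF_atTop : Tendsto stdNormalCDF atTop (nhds 1) := by
  have h : stdNormalCDF = fun x => ∫ t, (Iic x).indicator stdNormalPDF t := by
    funext x; exact (integral_indicator measurableSet_Iic).symm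
  rw [h, ← integral_stdNormalPDF]
  apply tendsto_integral_filter_of_dominated_convergence stdNormalPDF
  · exact Eventually.of_forall fun x =>
      (continuous_stdNormalPDF.aestronglyMeasurable).indicator measurableSet_Iic
  · refine Eventually.of_forall fun x => ae_of_all _ fun t => ?_
    rw [Real.norm_eq_abs, Set.indicator_apply]
    split
    · rw [abs_of_nonneg (stdNormalPDF_pos t).le]
    · simpa using (stdNormalPDF_pos t).le
  · exact integrable_stdNormalPDF
  · refine ae_of_all _ fun t => ?_
    refine Tendsto.congr' ?_ tendsto_const_nhds
    filter_upwards [eventually_ge_atTop t] with x hx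
    exact (indicator_of_mem (mem_Iic.mpr hx) _).symm

lemma tendsto_stdNormalCDF_atBot : Tendsto stdNormalCDF atBot (nhds 0) := by
  have h : stdNormalCDF = fun x => ∫ t, (Iic x).indicator stdNormalPDF t := by
    funext x; exact (integral_indicator measurableSet_Iic).symm
  rw [h]
  have h0 : (0:ℝ) = ∫ t : ℝ, (0:ℝ) := by simp
  rw [h0]
  apply tendsto_integral_filter_of_dominated_convergence stdNormalPDF
  · exact Eventually.of_forall fun x =>
      (continuous_stdNormalPDF.aestronglyMeasurable).indicator measurableSet_Iic
  · refine Eventually.of_forall fun x => ae_of_all _ fun t => ?_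
    rw [Real.norm_eq_abs, Set.indicator_apply]
    split
    · rw [abs_of_nonneg (stdNormalPDF_pos t).le]
    · simpa using (stdNormalPDF_pos t).le
  · exact integrable_stdNormalPDF
  · refine ae_of_all _ fun t => ?_
    refine Tendsto.congr' ?_ tendsto_const_nhds
    filter_upwards [eventually_lt_atBot t] with x hx
    exact (indicator_of_notMem (by simpa using hx) _).symm

lemma stdNormalCDF_lt_one (x : ℝ) : stdNormalCDF x < 1 := by
  by_contra hcon
  push_neg at hcon
  have h1 : (1:ℝ) < stdNormalCDF (x + 1) :=
    lt_of_le_of_lt hcon (strictMono_stdNormalCDF (lt_add_one x))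
  obtain ⟨y, hy1, hy2⟩ :=
    ((tendsto_stdNormalCDF_atTop.eventually_lt_const h1).and (eventually_ge_atTop (x + 1))).exists
  exact absurd (strictMono_stdNormalCDF.monotone hy2) (not_le.mpr hy1)

lemma exists_stdNormalCDF_eq {v : ℝ} (hv : v ∈ Ioo (0:ℝ) 1) : ∃ x, stdNormalCDF x = v := by
  obtain ⟨x₀, hx₀⟩ := (tendsto_stdNormalCDF_atBot.eventually_lt_const hv.1).exists
  obtain ⟨x₁, hx₁⟩ := (tendsto_stdNormalCDF_atTop.eventually_const_lt hv.2).exists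
  have hle : x₀ ≤ x₁ := by
    by_contra hc
    push_neg at hc
    exact absurd (strictMono_stdNormalCDF hc) (by linarith)
  obtain ⟨x, _, hx⟩ := intermediate_value_Icc hle continuous_stdNormalCDF.continuousOn
    (mem_Icc.mpr ⟨hx₀.le, hx₁.le⟩)
  exact ⟨x, hx⟩

lemma stdNormalCDF_invFun {v : ℝ} (hv : v ∈ Ioo (0:ℝ) 1) :
    stdNormalCDF (stdNormalCDFInv v) = v :=
  Function.invFun_eq (exists_stdNormalCDF_eq hv)

lemma monotoneOn_stdNormalCDFInv : MonotoneOn stdNormalCDFInv (Ioo (0:ℝ) 1) := by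
  intro x hx y hy hxy
  rw [← strictMono_stdNormalCDF.le_iff_le, stdNormalCDF_invFun hx, stdNormalCDF_invFun hy]
  exact hxy

lemma aemeasurable_stdNormalCDFInv :
    AEMeasurable stdNormalCDFInv (volume.restrict (Ioo (0:ℝ) 1)) :=
  aemeasurable_restrict_of_monotoneOn measurableSet_Ioo monotoneOn_stdNormalCDFInv

lemma map_stdNormalCDFInv :
    (volume.restrict (Ioo (0:ℝ) 1)).map stdNormalCDFInv
      = volume.withDensity (fun x => ENNReal.ofReal (stdNormalPDF x)) := by
  have hfin1 : IsFiniteMeasure ((volume.restrict (Ioo (0:ℝ) 1)).map stdNormalCDFInv) := by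
    constructor
    rw [Measure.map_apply_of_aemeasurable aemeasurable_stdNormalCDFInv MeasurableSet.univ]
    simp [Real.volume_Ioo]
  have hfin2 : IsFiniteMeasure (volume.withDensity (fun x => ENNReal.ofReal (stdNormalPDF x))) := by
    constructor
    rw [withDensity_apply _ MeasurableSet.univ, Measure.restrict_univ,
      ← ofReal_integral_eq_lintegral_ofReal integrable_stdNormalPDF
        (ae_of_all _ fun t => (stdNormalPDF_pos t).le)]
    simp
  haveI := hfin1
  haveI := hfin2
  refine Measure.ext_of_Iic _ _ fun x => ?_
  rw [Measure.map_apply_of_aemeasurable aemeasurable_stdNormalCDFInv measurableSet_Iic,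
    Measure.restrict_apply' measurableSet_Ioo,
    withDensity_apply _ measurableSet_Iic]
  have hset : stdNormalCDFInv ⁻¹' Iic x ∩ Ioo 0 1 = Ioc 0 (stdNormalCDF x) := by
    ext w
    simp only [mem_inter_iff, mem_preimage, mem_Iic, mem_Ioo, mem_Ioc]
    constructor
    · rintro ⟨hw1, hw2, hw3⟩
      refine ⟨hw2, ?_⟩
      calc w = stdNormalCDF (stdNormalCDFInv w) := (stdNormalCDF_invFun ⟨hw2, hw3⟩).symm
        _ ≤ stdNormalCDF x := strictMono_stdNormalCDF.monotone hw1
    · rintro ⟨hw1, hw2⟩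
      have hw3 : w < 1 := lt_of_le_of_lt hw2 (stdNormalCDF_lt_one x)
      refine ⟨?_, hw1, hw3⟩
      rw [← strictMono_stdNormalCDF.le_iff_le, stdNormalCDF_invFun ⟨hw1, hw3⟩]
      exact hw2
    
  rw [hset, Real.volume_Ioc,
    ← ofReal_integral_eq_lintegral_ofReal (integrableOn_stdNormalPDF _)
      (ae_of_all _ fun t => (stdNormalPDF_pos t).le)]
  simp [stdNormalCDF]

lemma integral_comp_stdNormalCDFInv (G : ℝ → ℝ) (hG : Continuous G) :
    ∫ w in (0:ℝ)..1, G (stdNormalCDFInv w) = ∫ x, G x * stdNormalPDF x := by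
  rw [intervalIntegral.integral_of_le zero_le_one, MeasureTheory.integral_Ioc_eq_integral_Ioo]
  have h1 : ∫ w in Ioo (0:ℝ) 1, G (stdNormalCDFInv w)
      = ∫ x, G x ∂((volume.restrict (Ioo (0:ℝ) 1)).map stdNormalCDFInv) :=
    (integral_map aemeasurable_stdNormalCDFInv hG.aestronglyMeasurable).symm
  rw [h1, map_stdNormalCDFInv]
  have h2 : (fun x => ENNReal.ofReal (stdNormalPDF x))
      = fun x => (((stdNormalPDF x).toNNReal : NNReal) : ENNReal) := rfl
  rw [h2, integral_withDensity_eq_integral_smul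
    (f := fun x => (stdNormalPDF x).toNNReal)
    (continuous_stdNormalPDF.measurable.real_toNNReal) G]
  congr 1
  funext x
  rw [NNReal.smul_def, smul_eq_mul, Real.coe_toNNReal _ (stdNormalPDF_pos x).le, mul_comm]

lemma integral_pdf_mul_pdf {b σ : ℝ} (hb : 0 < b) (hσ : 0 < σ) (z : ℝ) :
    ∫ x, stdNormalPDF x * stdNormalPDF ((z - b * x) / σ)
      = (σ / Real.sqrt (b ^ 2 + σ ^ 2)) * stdNormalPDF (z / Real.sqrt (b ^ 2 + σ ^ 2)) := by
  set τ : ℝ := Real.sqrt (b ^ 2 + σ ^ 2) with hτdef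
  have hτ : 0 < τ := Real.sqrt_pos.mpr (by positivity)
  have hτ2 : τ ^ 2 = b ^ 2 + σ ^ 2 := Real.sq_sqrt (by positivity)
  set A : ℝ := (Real.sqrt (2 * Real.pi))⁻¹ with hAdef
  have hkey : ∀ x : ℝ, stdNormalPDF x * stdNormalPDF ((z - b * x) / σ)
      = (A ^ 2 * Real.exp (-(z / τ) ^ 2 / 2)) *
        Real.exp (-((b ^ 2 + σ ^ 2) / (2 * σ ^ 2)) * (x - b * z / (b ^ 2 + σ ^ 2)) ^ 2) := by
    intro x
    have hexp : -x ^ 2 / 2 + -((z - b * x) / σ) ^ 2 / 2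
        = -(z / τ) ^ 2 / 2 + -((b ^ 2 + σ ^ 2) / (2 * σ ^ 2)) * (x - b * z / (b ^ 2 + σ ^ 2)) ^ 2 := by
      have h1 : (z / τ) ^ 2 = z ^ 2 / (b ^ 2 + σ ^ 2) := by rw [div_pow, hτ2]
      rw [h1]
      field_simp
      ring
    unfold stdNormalPDF
    rw [← hAdef]
    calc A * Real.exp (-x ^ 2 / 2) * (A * Real.exp (-((z - b * x) / σ) ^ 2 / 2))
        = A ^ 2 * Real.exp (-x ^ 2 / 2 + -((z - b * x) / σ) ^ 2 / 2) := by
          rw [Real.exp_add]; ring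
      _ = _ := by rw [hexp, Real.exp_add]; ring
  rw [funext hkey, MeasureTheory.integral_const_mul]
  have hint : ∫ x : ℝ, Real.exp (-((b ^ 2 + σ ^ 2) / (2 * σ ^ 2)) * (x - b * z / (b ^ 2 + σ ^ 2)) ^ 2)
      = Real.sqrt (2 * Real.pi) * (σ / τ) := by
    rw [integral_sub_right_eq_self (μ := volume)
      (fun y => Real.exp (-((b ^ 2 + σ ^ 2) / (2 * σ ^ 2)) * y ^ 2)) (b * z / (b ^ 2 + σ ^ 2))]
    rw [integral_gaussian]
    rw [show Real.pi / ((b ^ 2 + σ ^ 2) / (2 * σ ^ 2)) = 2 * Real.pi * (σ / τ) ^ 2 by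
      rw [div_pow, hτ2]; field_simp]
    rw [Real.sqrt_mul (by positivity), Real.sqrt_sq (by positivity)]
  rw [hint]
  unfold stdNormalPDF
  rw [← hAdef]
  have : A ^ 2 * Real.sqrt (2 * Real.pi) = A := by
    rw [hAdef, pow_two, mul_assoc, inv_mul_cancel₀ (ne_of_gt sqrt_two_pi_pos), mul_one]
  calc A ^ 2 * Real.exp (-(z / τ) ^ 2 / 2) * (Real.sqrt (2 * Real.pi) * (σ / τ))
      = (A ^ 2 * Real.sqrt (2 * Real.pi)) * (σ / τ) * Real.exp (-(z / τ) ^ 2 / 2) := by ring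
    _ = (σ / τ) * (A * Real.exp (-(z / τ) ^ 2 / 2)) := by rw [this]; ring

lemma stdNormalCDF_def' (x : ℝ) : stdNormalCDF x = ∫ t in Iic x, stdNormalPDF t := rfl

lemma integral_pdf_mul_cdf {b σ : ℝ} (hb : 0 < b) (hσ : 0 < σ) (a : ℝ) :
    ∫ x, stdNormalPDF x * stdNormalCDF ((a - b * x) / σ)
      = stdNormalCDF (a / Real.sqrt (b ^ 2 + σ ^ 2)) := by
  set τ : ℝ := Real.sqrt (b ^ 2 + σ ^ 2) with hτdef
  have hτ : 0 < τ := Real.sqrt_pos.mpr (by positivity)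
  have hA : ∀ x : ℝ, stdNormalPDF x * stdNormalCDF ((a - b * x) / σ)
      = ∫ z in Iic a, σ⁻¹ * (stdNormalPDF x * stdNormalPDF ((z - b * x) / σ)) := by
    intro x
    rw [MeasureTheory.integral_const_mul, MeasureTheory.integral_const_mul,
      integral_Iic_comp_affine stdNormalPDF hσ (b * x) a, ← stdNormalCDF_def']
    field_simp
  have hmeas : AEStronglyMeasurable
      (Function.uncurry fun x z => σ⁻¹ * (stdNormalPDF x * stdNormalPDF ((z - b * x) / σ)))
      (volume.prod (volume.restrict (Iic a))) := by
    apply Continuous.aestronglyMeasurable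
    apply Continuous.mul continuous_const
    apply Continuous.mul
    · exact continuous_stdNormalPDF.comp continuous_fst
    · exact continuous_stdNormalPDF.comp (by fun_prop)
  have hint : Integrable
      (Function.uncurry fun x z => σ⁻¹ * (stdNormalPDF x * stdNormalPDF ((z - b * x) / σ)))
      (volume.prod (volume.restrict (Iic a))) := by
    rw [MeasureTheory.integrable_prod_iff hmeas]
    simp only [Function.uncurry_apply_pair]
    constructor
    · refine ae_of_all _ fun x => ?_
      have h1 : Integrable (fun z : ℝ => stdNormalPDF ((z - b * x) / σ)) :=
        (integrable_stdNormalPDF.comp_div hσ.ne').comp_sub_right (b * x)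
      exact ((h1.integrableOn.const_mul (stdNormalPDF x)).const_mul σ⁻¹)
    · have heq : (fun x => ∫ z in Iic a,
          ‖σ⁻¹ * (stdNormalPDF x * stdNormalPDF ((z - b * x) / σ))‖)
          = fun x => stdNormalPDF x * stdNormalCDF ((a - b * x) / σ) := by
        funext x
        have hnn : ∀ z : ℝ, 0 ≤ σ⁻¹ * (stdNormalPDF x * stdNormalPDF ((z - b * x) / σ)) :=
          fun z => mul_nonneg (inv_nonneg.mpr hσ.le)
            (mul_nonneg (stdNormalPDF_pos _).le (stdNormalPDF_pos _).le)
        simp_rw [Real.norm_eq_abs, abs_of_nonneg (hnn _)]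
        exact (hA x).symm
      rw [heq]
      apply Integrable.mono' integrable_stdNormalPDF
      · exact (continuous_stdNormalPDF.mul
          (continuous_stdNormalCDF.comp (by fun_prop))).aestronglyMeasurable
      · refine ae_of_all _ fun x => ?_
        rw [Real.norm_eq_abs,
          abs_of_nonneg (mul_nonneg (stdNormalPDF_pos x).le (stdNormalCDF_nonneg _))]
        exact mul_le_of_le_one_right (stdNormalPDF_pos x).le (stdNormalCDF_lt_one _).le
  calc ∫ x, stdNormalPDF x * stdNormalCDF ((a - b * x) / σ)
      = ∫ x, ∫ z in Iic a, σ⁻¹ * (stdNormalPDF x * stdNormalPDF ((z - b * x) / σ)) := by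
        simp_rw [hA]
    _ = ∫ z in Iic a, ∫ x, σ⁻¹ * (stdNormalPDF x * stdNormalPDF ((z - b * x) / σ)) :=
        MeasureTheory.integral_integral_swap hint
    _ = ∫ z in Iic a, τ⁻¹ * stdNormalPDF (z / τ) := by
        refine setIntegral_congr_fun measurableSet_Iic fun z _ => ?_
        rw [MeasureTheory.integral_const_mul, integral_pdf_mul_pdf hb hσ z, ← hτdef, ← mul_assoc]
        congr 1
        field_simp
    _ = τ⁻¹ * ∫ z in Iic a, stdNormalPDF (z / τ) := MeasureTheory.integral_const_mul _ _
    _ = τ⁻¹ * (τ * stdNormalCDF (a / τ)) := by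
        have h := integral_Iic_comp_affine stdNormalPDF hτ 0 a
        simp only [sub_zero] at h
        rw [h, ← stdNormalCDF_def']
    _ = stdNormalCDF (a / τ) := by field_simp

lemma key_integral {m sv : ℝ} (hm : 0 < m) (hsv : 0 < sv) {v : ℝ} (hv : v ∈ Ioo (0:ℝ) 1) :
    ∫ w in (0:ℝ)..1, stdNormalCDF ((Real.sqrt (m + sv) * stdNormalCDFInv v
      - Real.sqrt m * stdNormalCDFInv w) / Real.sqrt sv) = v := by
  set b : ℝ := Real.sqrt m with hbdef
  set σ : ℝ := Real.sqrt sv with hσdef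
  set a : ℝ := Real.sqrt (m + sv) * stdNormalCDFInv v with hadef
  have hb : 0 < b := Real.sqrt_pos.mpr hm
  have hσ : 0 < σ := Real.sqrt_pos.mpr hsv
  have hG : Continuous (fun x => stdNormalCDF ((a - b * x) / σ)) :=
    continuous_stdNormalCDF.comp (by fun_prop)
  have h1 : ∫ w in (0:ℝ)..1, stdNormalCDF ((a - b * stdNormalCDFInv w) / σ)
      = ∫ x, stdNormalCDF ((a - b * x) / σ) * stdNormalPDF x :=
    integral_comp_stdNormalCDFInv _ hG
  have h2 : (∫ w in (0:ℝ)..1, stdNormalCDF ((a - b * stdNormalCDFInv w) / σ))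
      = ∫ w in (0:ℝ)..1, stdNormalCDF ((a - Real.sqrt m * stdNormalCDFInv w) / Real.sqrt sv) := rfl
  rw [← h2, h1]
  simp_rw [mul_comm (stdNormalCDF _) (stdNormalPDF _)]
  rw [integral_pdf_mul_cdf hb hσ a]
  have hbs : b ^ 2 + σ ^ 2 = m + sv := by
    rw [hbdef, hσdef, Real.sq_sqrt hm.le, Real.sq_sqrt hsv.le]
  rw [hbs, hadef, mul_comm, mul_div_assoc, div_self (ne_of_gt (Real.sqrt_pos.mpr (by positivity))), mul_one]
  exact stdNormalCDF_invFun hv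

/-- For s, t > 0 and u, v ∈ [0,1], ψ(s,t;·,·) satisfies the copula boundary conditions. -/
theorem psi_boundary_conditions (s t u v : ℝ) (hs : 0 < s) (ht : 0 < t)
    (hu : u ∈ Set.Icc (0:ℝ) 1) (hv : v ∈ Set.Icc (0:ℝ) 1) :
    psi s t 0 v = 0 ∧ psi s t u 0 = 0 ∧ psi s t u 1 = u ∧ psi s t 1 v = v := by
  by_cases hd : 0 < |t - s|
  · have hpsiI0 : ∀ w, psiIntegrand s t 0 w = 0 := fun w => by simp [psiIntegrand]
    have hpsiI1 : ∀ w, psiIntegrand s t 1 w = 1 := fun w => by norm_num [psiIntegrand]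
    refine ⟨?_, ?_, ?_, ?_⟩
    · rw [psi, if_pos hd, intervalIntegral.integral_same]
    · rw [psi, if_pos hd]; simp [hpsiI0]
    · rw [psi, if_pos hd]; simp [hpsiI1]
    · rw [psi, if_pos hd]
      rcases eq_or_lt_of_le hv.1 with hv0 | hv0
      · rw [← hv0]; simp [hpsiI0]
      rcases eq_or_lt_of_le hv.2 with hv1 | hv1
      · rw [hv1]; simp [hpsiI1]
      have hmin : 0 < min s t := lt_min hs ht
      have hmax : max s t = min s t + |t - s| := by
        rcases le_total s t with h | h
        · rw [max_eq_right h, min_eq_left h, abs_of_nonneg (by linarith)]; ring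
        · rw [max_eq_left h, min_eq_right h, abs_of_nonpos (by linarith)]; ring
      have hint : ∀ w, psiIntegrand s t v w
          = stdNormalCDF ((Real.sqrt (min s t + |t - s|) * stdNormalCDFInv v
            - Real.sqrt (min s t) * stdNormalCDFInv w) / Real.sqrt |t - s|) := by
        intro w
        rw [psiIntegrand, if_neg (not_le.mpr hv0), if_neg (not_le.mpr hv1), hmax]
      simp_rw [hint]
      exact key_integral hmin hd ⟨hv0, hv1⟩
  · refine ⟨?_, ?_, ?_, ?_⟩ <;> rw [psi, if_neg hd, if_pos ht]
    · exact min_eq_left hv.1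
    · exact min_eq_right hu.1
    · exact min_eq_left hu.2
    · exact min_eq_right hv.2
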